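/- Let μ ∈ ℝ, λ ∈ ℤ, and let Φ(z,X) ∈ 𝓕[[X]] be a formal power series with holomorphic coefficients. Then for every γ ∈ SL(2,ℝ) and all z ∈ ℍ, one has (𝔏_μ(Φ) |^J_{λ+2} γ)(z,X) = 𝔏_μ(Φ |^J_λ γ)(z,X) + (λ − μ) 𝔎(γ,z) (Φ |^J_λ γ)(z,X). -/

import Mathlib

noncomputable section

open Complex Polynomial

/-- The upper half plane `ℍ`, as a subset of `ℂ`. -/
def UHP : Set ℂ := {z : ℂ | 0 < z.im}

/-- `SL(2, ℝ)`. -/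
abbrev SL2R := Matrix.SpecialLinearGroup (Fin 2) ℝ

/-- `GL⁺(2, ℝ)`, the group of real 2×2 matrices of positive determinant. -/
abbrev GL2P := Matrix.GLPos (Fin 2) ℝ

/-- Topology on `SL(2,ℝ)` induced from the space of matrices (used to speak of
discrete subgroups of `SL(2,ℝ)`). -/
instance : TopologicalSpace SL2R :=
  TopologicalSpace.induced (fun g : SL2R => (g : Matrix (Fin 2) (Fin 2) ℝ)) inferInstance

/-- A function belongs to `𝓕` if it is holomorphic on the upper half plane. -/
def Hol (f : ℂ → ℂ) : Prop := DifferentiableOn ℂ f UHP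

/-- `𝔍(γ, z) = cz + d` for `γ ∈ SL(2, ℝ)`. -/
def jJ (γ : SL2R) (z : ℂ) : ℂ := (γ 1 0 : ℝ) * z + (γ 1 1 : ℝ)

/-- `𝔎(γ, z) = c/(cz + d)` for `γ ∈ SL(2, ℝ)`. -/
def kK (γ : SL2R) (z : ℂ) : ℂ := (γ 1 0 : ℝ) / jJ γ z

/-- `γ z = (az+b)/(cz+d)` for `γ ∈ SL(2, ℝ)`. -/
def mact (γ : SL2R) (z : ℂ) : ℂ := ((γ 0 0 : ℝ) * z + (γ 0 1 : ℝ)) / jJ γ z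

/-- The underlying real matrix of an element of `GL⁺(2, ℝ)`. -/
def gmat (α : GL2P) : Matrix (Fin 2) (Fin 2) ℝ :=
  ((α : Matrix.GeneralLinearGroup (Fin 2) ℝ) : Matrix (Fin 2) (Fin 2) ℝ)

/-- The determinant of an element of `GL⁺(2, ℝ)`. -/
def gdet (α : GL2P) : ℝ := (gmat α).det

/-- `𝔍(α, z) = cz + d` for `α ∈ GL⁺(2, ℝ)`. -/
def gJ (α : GL2P) (z : ℂ) : ℂ := (gmat α 1 0 : ℝ) * z + (gmat α 1 1 : ℝ)

/-- `𝔎(α, z) = c/(cz + d)` for `α ∈ GL⁺(2, ℝ)`. -/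
def gK (α : GL2P) (z : ℂ) : ℂ := (gmat α 1 0 : ℝ) / gJ α z

/-- `α z = (az+b)/(cz+d)` for `α ∈ GL⁺(2, ℝ)`. -/
def gact (α : GL2P) (z : ℂ) : ℂ := ((gmat α 0 0 : ℝ) * z + (gmat α 0 1 : ℝ)) / gJ α z

/-- `(det α)^(μ/2)` for `α ∈ GL⁺(2, ℝ)` and `μ ∈ ℤ`. -/
def detpow (α : GL2P) (μ : ℤ) : ℂ := ((gdet α ^ ((μ : ℝ) / 2) : ℝ) : ℂ)

/-- The weight-`ξ` action `F ∥_ξ γ` of `SL(2,ℝ)` on polynomials over `𝓕`: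
`(F ∥_ξ γ)(z, X) = 𝔍(γ,z)^(-ξ) F(γz, 𝔍(γ,z)^2 (X - 𝔎(γ,z)))`. -/
def polyAct (ξ : ℤ) (F : ℂ → Polynomial ℂ) (γ : SL2R) : ℂ → Polynomial ℂ := fun z =>
  Polynomial.C (jJ γ z ^ (-ξ)) *
    (F (mact γ z)).comp (Polynomial.C (jJ γ z ^ 2) * (Polynomial.X - Polynomial.C (kK γ z)))

/-- The weight-`ξ` action `F ∥_ξ α` of `GL⁺(2,ℝ)` on polynomials over `𝓕`:
`(F ∥_ξ α)(z, X) = (det α)^(ξ/2) 𝔍(α,z)^(-ξ) F(αz, (det α)⁻¹ 𝔍(α,z)^2 (X - 𝔎(α,z)))`. -/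
def polyActG (ξ : ℤ) (F : ℂ → Polynomial ℂ) (α : GL2P) : ℂ → Polynomial ℂ := fun z =>
  Polynomial.C (detpow α ξ * gJ α z ^ (-ξ)) *
    (F (gact α z)).comp
      (Polynomial.C ((gdet α : ℂ)⁻¹ * gJ α z ^ 2) * (Polynomial.X - Polynomial.C (gK α z)))

/-- The weight-`l` action `Φ |^J_l γ` of `SL(2,ℝ)` on formal power series over `𝓕`:
`(Φ |^J_l γ)(z, X) = 𝔍(γ,z)^(-l) e^(-𝔎(γ,z) X) Φ(γz, 𝔍(γ,z)^(-2) X)`. -/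
def psAct (l : ℤ) (Φ : ℂ → PowerSeries ℂ) (γ : SL2R) : ℂ → PowerSeries ℂ := fun z =>
  PowerSeries.C (jJ γ z ^ (-l)) *
    (PowerSeries.mk fun n => (-(kK γ z)) ^ n / (n.factorial : ℂ)) *
    PowerSeries.rescale (jJ γ z ^ (-2 : ℤ)) (Φ (mact γ z))

/-- The weight-`l` action `Φ |^J_l α` of `GL⁺(2,ℝ)` on formal power series over `𝓕`:
`(Φ |^J_l α)(z, X) = (det α)^(l/2) 𝔍(α,z)^(-l) e^(-𝔎(α,z) X) Φ(αz, (det α) 𝔍(α,z)^(-2) X)`. -/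
def psActG (l : ℤ) (Φ : ℂ → PowerSeries ℂ) (α : GL2P) : ℂ → PowerSeries ℂ := fun z =>
  PowerSeries.C (detpow α l * gJ α z ^ (-l)) *
    (PowerSeries.mk fun n => (-(gK α z)) ^ n / (n.factorial : ℂ)) *
    PowerSeries.rescale ((gdet α : ℂ) * gJ α z ^ (-2 : ℤ)) (Φ (gact α z))

/-- The map `Π^δ_m`: for `Φ(z,X) = Σ_k φ_k(z) X^(k+δ)`,
`(Π^δ_m Φ)(z, X) = Σ_{r=0}^m (1/r!) φ_(m-r)(z) X^r`. -/
def PiDM (δ m : ℕ) (Φ : ℂ → PowerSeries ℂ) : ℂ → Polynomial ℂ := fun z =>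
  ∑ r ∈ Finset.range (m + 1),
    Polynomial.C ((PowerSeries.coeff (m - r + δ) (Φ z)) / (r.factorial : ℂ)) *
      Polynomial.X ^ r

/-- Membership in `𝓕_m[X]`: degree at most `m` and holomorphic coefficients. -/
def InFmX (m : ℕ) (F : ℂ → Polynomial ℂ) : Prop :=
  (∀ z : ℂ, (F z).degree ≤ (m : WithBot ℕ)) ∧ ∀ r : ℕ, Hol fun z => (F z).coeff r

/-- Membership in `𝓕[[X]]_δ = X^δ 𝓕[[X]]` with holomorphic coefficients. -/
def InFXd (δ : ℕ) (Φ : ℂ → PowerSeries ℂ) : Prop :=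
  (∀ z : ℂ, ∀ k < δ, PowerSeries.coeff k (Φ z) = 0) ∧
    ∀ k : ℕ, Hol fun z => PowerSeries.coeff k (Φ z)

/-- `QP^m_ξ(Γ)`: quasimodular polynomials of weight `ξ` and degree at most `m` for `Γ`. -/
def IsQP (Γ : Subgroup SL2R) (ξ : ℤ) (m : ℕ) (F : ℂ → Polynomial ℂ) : Prop :=
  InFmX m F ∧ ∀ γ ∈ Γ, ∀ z ∈ UHP, polyAct ξ F γ z = F z

/-- `J_l(Γ)_δ`: Jacobi-like forms of weight `l` for `Γ` lying in `𝓕[[X]]_δ`. -/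
def IsJF (Γ : Subgroup SL2R) (l : ℤ) (δ : ℕ) (Φ : ℂ → PowerSeries ℂ) : Prop :=
  InFXd δ Φ ∧ ∀ γ ∈ Γ, ∀ z ∈ UHP, psAct l Φ γ z = Φ z

/-- `M_μ(Γ)`: modular forms of weight `μ` for `Γ` (cusp conditions suppressed). -/
def IsModular (Γ : Subgroup SL2R) (μ : ℤ) (f : ℂ → ℂ) : Prop :=
  Hol f ∧ ∀ γ ∈ Γ, ∀ z ∈ UHP, jJ γ z ^ (-μ) * f (mact γ z) = f z

/-- `QM^m_ξ(Γ)`: quasimodular forms of weight `ξ` and depth at most `m` for `Γ`. -/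
def IsQM (Γ : Subgroup SL2R) (ξ : ℤ) (m : ℕ) (f : ℂ → ℂ) : Prop :=
  Hol f ∧ ∃ g : ℕ → ℂ → ℂ, (∀ r, Hol (g r)) ∧
    ∀ γ ∈ Γ, ∀ z ∈ UHP,
      jJ γ z ^ (-ξ) * f (mact γ z) = ∑ r ∈ Finset.range (m + 1), g r z * kK γ z ^ r

/-- The factorial `t!` of an integer `t` (equal to `(t.toNat)!`; intended for `t ≥ 0`). -/
def zfact (t : ℤ) : ℂ := (t.toNat.factorial : ℂ)

/-- The radial heat operator `𝔏_μ = ∂/∂z - μ ∂/∂X - X ∂²/∂X²` on `𝓕[[X]]`. -/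
def heat (μ : ℝ) (Φ : ℂ → PowerSeries ℂ) : ℂ → PowerSeries ℂ := fun z =>
  PowerSeries.mk fun n =>
    deriv (fun w => PowerSeries.coeff n (Φ w)) z -
      ((n : ℂ) + 1) * ((μ : ℂ) + (n : ℂ)) * PowerSeries.coeff (n + 1) (Φ z)


/-!
The `X^n`-coefficient of `Φ |^J_l γ` is `∑_{i+j=n} (-𝔎)^i/i! · 𝔍^{-l-2j} φ_j(γz)`. Since
`∂_z 𝔍^e = e 𝔎 𝔍^e`, `∂_z 𝔎 = -𝔎²` and `∂_z (γz) = 𝔍^{-2}`, its `z`-derivative is the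
`∂_z`-part of `𝔏_μ Φ |^J_{l+2} γ` plus multiples of `𝔎`. After the index shift
`𝔎 · (-𝔎)^i/i! = -(i+1) · (-𝔎)^{i+1}/(i+1)!`, these cancel against the `X`-part of `𝔏_μ`
up to `(l - μ) 𝔎 (Φ |^J_l γ)`.
-/

open Finset Nat

lemma mul_neg_pow_div_factorial {𝕜 : Type*} [Field 𝕜] [CharZero 𝕜] (K : 𝕜) (i : ℕ) :
    K * ((-K) ^ i / i !) = -(i + 1) * ((-K) ^ (i + 1) / (i + 1)!) := by
  rw [Nat.factorial_succ]
  push_cast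
  field_simp
  ring

section RadialIdentity

variable {R : Type*} [CommRing R] (μ K : R) (e s : ℕ → R)

lemma sum_antidiagonal_radial_identity (he : ∀ i, K * e i = -(i + 1) * e (i + 1)) (n : ℕ) :
    ∑ p ∈ antidiagonal n, e p.1 * ((p.2 + 1) * (μ + p.2) * s (p.2 + 1)) =
      ∑ p ∈ antidiagonal n, (μ + 2 * p.2 + p.1) * K * (e p.1 * s p.2) +
        (n + 1) * (μ + n) * ∑ p ∈ antidiagonal (n + 1), e p.1 * s p.2 := by
  have hleft : ∑ p ∈ antidiagonal n, e p.1 * ((p.2 + 1) * (μ + p.2) * s (p.2 + 1)) =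
      ∑ p ∈ antidiagonal (n + 1), p.2 * (μ + p.2 - 1) * (e p.1 * s p.2) := by
    rw [Nat.sum_antidiagonal_succ']
    push_cast
    rw [zero_mul, zero_mul, zero_add]
    exact sum_congr rfl fun p _ => by ring
  have hshift : ∑ p ∈ antidiagonal n, (μ + 2 * p.2 + p.1) * K * (e p.1 * s p.2) =
      -∑ p ∈ antidiagonal (n + 1), p.1 * (μ + 2 * p.2 + p.1 - 1) * (e p.1 * s p.2) := by
    rw [Nat.sum_antidiagonal_succ]
    push_cast
    rw [zero_mul, zero_mul, zero_add, ← sum_neg_distrib]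
    exact sum_congr rfl fun p _ => by linear_combination (μ + 2 * p.2 + p.1) * s p.2 * he p.1
  rw [hleft, hshift, mul_sum, neg_add_eq_sub, ← sum_sub_distrib]
  refine sum_congr rfl fun p hp => ?_
  have hn : (p.1 : R) + p.2 = n + 1 := by
    exact_mod_cast congrArg (Nat.cast (R := R)) (mem_antidiagonal.1 hp)
  linear_combination (μ - 1 + p.1 + p.2 + n + 1) * (e p.1 * s p.2) * hn

lemma sum_antidiagonal_heat_identity (he : ∀ i, K * e i = -(i + 1) * e (i + 1)) (l : R)
    (t : ℕ → R) (n : ℕ) :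
    ∑ p ∈ antidiagonal n, e p.1 * (t p.2 - (p.2 + 1) * (μ + p.2) * s (p.2 + 1)) =
      ∑ p ∈ antidiagonal n, ((-l - 2 * p.2 - p.1) * K * (e p.1 * s p.2) + e p.1 * t p.2) -
        (n + 1) * (μ + n) * ∑ p ∈ antidiagonal (n + 1), e p.1 * s p.2 +
        (l - μ) * K * ∑ p ∈ antidiagonal n, e p.1 * s p.2 := by
  have hK : ∑ p ∈ antidiagonal n, (-l - 2 * p.2 - p.1) * K * (e p.1 * s p.2) +
      (l - μ) * K * ∑ p ∈ antidiagonal n, e p.1 * s p.2 =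
        -∑ p ∈ antidiagonal n, (μ + 2 * p.2 + p.1) * K * (e p.1 * s p.2) := by
    rw [mul_sum, ← sum_add_distrib, ← sum_neg_distrib]
    exact sum_congr rfl fun p _ => by ring
  have hsplit : ∑ p ∈ antidiagonal n, e p.1 * (t p.2 - (p.2 + 1) * (μ + p.2) * s (p.2 + 1)) =
      ∑ p ∈ antidiagonal n, e p.1 * t p.2 -
        ∑ p ∈ antidiagonal n, e p.1 * ((p.2 + 1) * (μ + p.2) * s (p.2 + 1)) := by
    rw [← sum_sub_distrib]
    exact sum_congr rfl fun p _ => by ring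
  rw [hsplit, sum_add_distrib]
  linear_combination -sum_antidiagonal_radial_identity μ K e s he n - hK

end RadialIdentity

lemma isOpen_UHP : IsOpen UHP := isOpen_lt continuous_const Complex.continuous_im

lemma mact_mem_UHP (γ : SL2R) {z : ℂ} (hz : z ∈ UHP) : mact γ z ∈ UHP := by
  have h := (γ • (⟨z, hz⟩ : UpperHalfPlane)).im_pos
  show 0 < (mact γ z).im
  simpa [mact, jJ, UpperHalfPlane.im, UpperHalfPlane.coe_specialLinearGroup_apply] using h

lemma jJ_ne_zero (γ : SL2R) {z : ℂ} (hz : z ∈ UHP) : jJ γ z ≠ 0 := by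
  simpa [UpperHalfPlane.denom, jJ] using
    UpperHalfPlane.denom_ne_zero_of_im (Matrix.SpecialLinearGroup.mapGL ℝ γ) hz.ne'

lemma hasDerivAt_jJ (γ : SL2R) (z : ℂ) : HasDerivAt (jJ γ) ((γ 1 0 : ℝ) : ℂ) z := by
  unfold jJ
  simpa using ((hasDerivAt_id z).const_mul ((γ 1 0 : ℝ) : ℂ)).add_const ((γ 1 1 : ℝ) : ℂ)

section Derivatives

variable (γ : SL2R) {z : ℂ}

lemma hasDerivAt_jJ_zpow (hJ : jJ γ z ≠ 0) (e : ℤ) :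
    HasDerivAt (fun w => jJ γ w ^ e) (e * kK γ z * jJ γ z ^ e) z := by
  refine ((hasDerivAt_zpow e _ (Or.inl hJ)).comp z (hasDerivAt_jJ γ z)).congr_deriv ?_
  rw [kK, zpow_sub_one₀ hJ]
  field_simp

lemma hasDerivAt_kK (hJ : jJ γ z ≠ 0) : HasDerivAt (kK γ) (-kK γ z ^ 2) z := by
  refine ((hasDerivAt_const z ((γ 1 0 : ℝ) : ℂ)).div (hasDerivAt_jJ γ z) hJ).congr_deriv ?_
  rw [kK]
  field_simp
  ring

lemma hasDerivAt_neg_kK_pow_div_factorial (hJ : jJ γ z ≠ 0) (i : ℕ) :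
    HasDerivAt (fun w => (-kK γ w) ^ i / i !) (-i * kK γ z * ((-kK γ z) ^ i / i !)) z := by
  refine (((hasDerivAt_kK γ hJ).fun_neg.fun_pow i).div_const _).congr_deriv ?_
  rcases i with _ | i
  · simp
  · rw [Nat.add_sub_cancel, pow_succ]
    push_cast
    ring

lemma hasDerivAt_mact (hJ : jJ γ z ≠ 0) : HasDerivAt (mact γ) (jJ γ z ^ (-2 : ℤ)) z := by
  have hnum : HasDerivAt (fun w => ((γ 0 0 : ℝ) : ℂ) * w + ((γ 0 1 : ℝ) : ℂ))
      ((γ 0 0 : ℝ) : ℂ) z := by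
    simpa using ((hasDerivAt_id z).const_mul ((γ 0 0 : ℝ) : ℂ)).add_const ((γ 0 1 : ℝ) : ℂ)
  have hdet : ((γ 0 0 : ℝ) : ℂ) * (γ 1 1 : ℝ) - (γ 0 1 : ℝ) * (γ 1 0 : ℝ) = 1 := by
    exact_mod_cast (Matrix.det_fin_two (γ : Matrix (Fin 2) (Fin 2) ℝ)).symm.trans γ.2
  refine (hnum.div (hasDerivAt_jJ γ z) hJ).congr_deriv ?_
  rw [zpow_neg, zpow_two]
  simp only [jJ] at hJ ⊢
  field_simp
  linear_combination hdet

lemma hasDerivAt_jJ_zpow_mul_comp_mact (hJ : jJ γ z ≠ 0) (e : ℤ) {f : ℂ → ℂ}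
    (hf : DifferentiableAt ℂ f (mact γ z)) :
    HasDerivAt (fun w => jJ γ w ^ e * f (mact γ w))
      (e * kK γ z * (jJ γ z ^ e * f (mact γ z)) + jJ γ z ^ (e - 2) * deriv f (mact γ z)) z := by
  refine ((hasDerivAt_jJ_zpow γ hJ e).mul
    (hf.hasDerivAt.comp z (hasDerivAt_mact γ hJ))).congr_deriv ?_
  rw [sub_eq_add_neg e 2, zpow_add₀ hJ, Function.comp_apply]
  ring

end Derivatives

/-- The `X^j`-coefficient of `𝔍(γ,z)^{-l} Φ(γz, 𝔍(γ,z)^{-2} X)`. -/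
def slashCoeff (l : ℤ) (Φ : ℂ → PowerSeries ℂ) (γ : SL2R) (j : ℕ) (z : ℂ) : ℂ :=
  jJ γ z ^ (-l - 2 * (j : ℤ)) * PowerSeries.coeff j (Φ (mact γ z))

section SlashCoeff

variable (l : ℤ) (Φ : ℂ → PowerSeries ℂ) (γ : SL2R) {z : ℂ}

lemma coeff_psAct (hJ : jJ γ z ≠ 0) (n : ℕ) :
    PowerSeries.coeff n (psAct l Φ γ z) =
      ∑ p ∈ antidiagonal n, (-kK γ z) ^ p.1 / p.1 ! * slashCoeff l Φ γ p.2 z := by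
  rw [psAct, mul_assoc, PowerSeries.coeff_C_mul, PowerSeries.coeff_mul, mul_sum]
  refine sum_congr rfl fun p _ => ?_
  rw [PowerSeries.coeff_mk, PowerSeries.coeff_rescale, slashCoeff,
    ← zpow_natCast (jJ γ z ^ (-2 : ℤ)), ← zpow_mul,
    show -l - 2 * (p.2 : ℤ) = -l + -2 * p.2 by ring, zpow_add₀ hJ]
  ring

lemma slashCoeff_heat (μ : ℝ) (j : ℕ) :
    slashCoeff (l + 2) (heat μ Φ) γ j z =
      jJ γ z ^ (-(l + 2) - 2 * (j : ℤ)) * deriv (fun w => PowerSeries.coeff j (Φ w)) (mact γ z) -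
        (j + 1) * (μ + j) * slashCoeff l Φ γ (j + 1) z := by
  rw [slashCoeff, slashCoeff, heat, PowerSeries.coeff_mk,
    show -l - 2 * ((j + 1 : ℕ) : ℤ) = -(l + 2) - 2 * (j : ℤ) by push_cast; ring]
  ring

variable {Φ}

lemma hasDerivAt_slashCoeff (hΦ : ∀ k : ℕ, Hol fun z => PowerSeries.coeff k (Φ z))
    (hz : z ∈ UHP) (j : ℕ) :
    HasDerivAt (slashCoeff l Φ γ j)
      ((-l - 2 * j) * kK γ z * slashCoeff l Φ γ j z +
        jJ γ z ^ (-(l + 2) - 2 * (j : ℤ)) * deriv (fun w => PowerSeries.coeff j (Φ w)) (mact γ z))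
      z := by
  have h := hasDerivAt_jJ_zpow_mul_comp_mact γ (jJ_ne_zero γ hz) (-l - 2 * j)
    ((hΦ j).differentiableAt (isOpen_UHP.mem_nhds (mact_mem_UHP γ hz)))
  rw [show -l - 2 * (j : ℤ) - 2 = -(l + 2) - 2 * j by ring] at h
  exact_mod_cast h

lemma hasDerivAt_coeff_psAct (hΦ : ∀ k : ℕ, Hol fun z => PowerSeries.coeff k (Φ z))
    (hz : z ∈ UHP) (n : ℕ) :
    HasDerivAt (fun w => PowerSeries.coeff n (psAct l Φ γ w))
      (∑ p ∈ antidiagonal n,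
        ((-l - 2 * p.2 - p.1) * kK γ z * ((-kK γ z) ^ p.1 / p.1 ! * slashCoeff l Φ γ p.2 z) +
          (-kK γ z) ^ p.1 / p.1 ! * (jJ γ z ^ (-(l + 2) - 2 * (p.2 : ℤ)) *
            deriv (fun w => PowerSeries.coeff p.2 (Φ w)) (mact γ z)))) z := by
  have hsum := HasDerivAt.fun_sum fun p (_ : p ∈ antidiagonal n) =>
    (hasDerivAt_neg_kK_pow_div_factorial γ (jJ_ne_zero γ hz) p.1).mul
      (hasDerivAt_slashCoeff l γ hΦ hz p.2)
  refine (hsum.congr_deriv (sum_congr rfl fun p _ => by ring)).congr_of_eventuallyEq ?_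
  filter_upwards [isOpen_UHP.mem_nhds hz] with w hw
  exact coeff_psAct l Φ γ (jJ_ne_zero γ hw) n

end SlashCoeff

theorem stmt17 (μ : ℝ) (l : ℤ) (Φ : ℂ → PowerSeries ℂ)
    (hΦ : ∀ k : ℕ, Hol fun z => PowerSeries.coeff k (Φ z)) (γ : SL2R) :
    ∀ z ∈ UHP,
      psAct (l + 2) (heat μ Φ) γ z =
        heat μ (psAct l Φ γ) z + PowerSeries.C (((l : ℂ) - (μ : ℂ)) * kK γ z) *
          psAct l Φ γ z := by
  intro z hz
  have hJ := jJ_ne_zero γ hz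
  ext n
  rw [map_add, PowerSeries.coeff_C_mul, heat, PowerSeries.coeff_mk,
    (hasDerivAt_coeff_psAct l γ hΦ hz n).deriv]
  simp only [coeff_psAct _ _ _ hJ, slashCoeff_heat]
  exact sum_antidiagonal_heat_identity (μ : ℂ) (kK γ z) (fun i => (-kK γ z) ^ i / i !)
    (fun j => slashCoeff l Φ γ j z) (mul_neg_pow_div_factorial _) l
    (fun j => jJ γ z ^ (-(l + 2) - 2 * (j : ℤ)) *
      deriv (fun w => PowerSeries.coeff j (Φ w)) (mact γ z)) n
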